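/- For all integers n ≥ 1 and all ℓ > 0, g ≥ 0, the following two upper bounds hold: E_N^{1D}(n,ℓ,g) ≤ g·n(n−1)/(2ℓ), and E_N^{1D}(n,ℓ,g) ≤ (π²/3)·n³/ℓ². -/

import Mathlib

open MeasureTheory Real Filter Set
open scoped ENNReal

noncomputable section

/-- The box `[0,ℓ]^n`. -/
def box (n : ℕ) (ℓ : ℝ) : Set (Fin n → ℝ) := Set.pi Set.univ (fun _ => Set.Icc 0 ℓ)

/-- The quadratic form of the Lieb-Liniger Hamiltonian
`∑_j -∂_j² + g ∑_{i<j} δ(z_i - z_j)` on `[0,ℓ]^n`.  The delta interaction term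
`∫ ψ² dσ_{ij}` (integral of `ψ²` over the hyperplane `{z_i = z_j} ∩ [0,ℓ]^n`) is
encoded as `ℓ⁻¹ ∫_{[0,ℓ]^n} ψ(z with z_j replaced by z_i)² dz`, which equals the
hyperplane integral since the integrand does not depend on `z_j`. -/
noncomputable def Q1D (n : ℕ) (ℓ g : ℝ) (ψ : (Fin n → ℝ) → ℝ) : ℝ :=
  (∑ j : Fin n, ∫ z in box n ℓ, (deriv (fun t => ψ (Function.update z j t)) (z j))^2)
  + g * ∑ i : Fin n, ∑ j ∈ Finset.Ioi i, ℓ⁻¹ * ∫ z in box n ℓ, (ψ (Function.update z j (z i)))^2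

/-- Admissible (normalized real C¹) wave functions on `[0,ℓ]^n`. -/
def adm1D (n : ℕ) (ℓ : ℝ) (ψ : (Fin n → ℝ) → ℝ) : Prop :=
  ContDiff ℝ 1 ψ ∧ (∫ z in box n ℓ, (ψ z)^2) = 1

/-- Neumann ground state energy `E_N^{1D}(n,ℓ,g)` of the Lieb-Liniger Hamiltonian. -/
noncomputable def E1DN (n : ℕ) (ℓ g : ℝ) : ℝ :=
  sInf {E | ∃ ψ, adm1D n ℓ ψ ∧ Q1D n ℓ g ψ = E}

/-- Dirichlet ground state energy `E_D^{1D}(n,ℓ,g)` of the Lieb-Liniger Hamiltonian. -/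
noncomputable def E1DD (n : ℕ) (ℓ g : ℝ) : ℝ :=
  sInf {E | ∃ ψ, adm1D n ℓ ψ ∧
    (∀ z ∈ box n ℓ, (∃ j, z j = 0 ∨ z j = ℓ) → ψ z = 0) ∧ Q1D n ℓ g ψ = E}

/-- Periodic ground state energy `E_p^{1D}(n,ℓ,g)` of the Lieb-Liniger Hamiltonian. -/
noncomputable def E1Dp (n : ℕ) (ℓ g : ℝ) : ℝ :=
  sInf {E | ∃ ψ, adm1D n ℓ ψ ∧
    (∀ z j, ψ (Function.update z j (z j + ℓ)) = ψ z) ∧ Q1D n ℓ g ψ = E}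

/-!
Both bounds come from evaluating `Q1D` on trial states; for `g ≥ 0` the form is nonnegative,
so the infimum is a genuine lower bound. The normalized constant has no kinetic energy and mass
`1` on each of the `n (n - 1) / 2` diagonals. The Slater determinant of the Neumann modes
`cos (k π x / ℓ)`, `k < n` (the determinant itself, which is `C¹`, rather than its modulus)
vanishes on the diagonals; since the modes and their derivatives are both orthogonal families,
its kinetic energy is `(π / ℓ)² ∑_{k < n} k² ≤ π² n³ / (3 ℓ²)`.
-/

namespace LiebLiniger

open Equiv

lemma integral_cos_int_mul (m : ℤ) :
    ∫ x in (0 : ℝ)..π, cos (m * x) = if m = 0 then π else 0 := by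
  split_ifs with hm
  · simp [hm]
  · have hm' : (m : ℝ) ≠ 0 := Int.cast_ne_zero.mpr hm
    simp [intervalIntegral.integral_comp_mul_left (fun x => cos x) hm', sin_int_mul_pi]

lemma integral_cos_mul_cos (a b : ℕ) :
    ∫ x in (0 : ℝ)..π, cos (a * x) * cos (b * x) =
      if a = b then (if a = 0 then π else π / 2) else 0 := by
  have h : ∀ x : ℝ, cos (a * x) * cos (b * x) =
      (cos (((a - b : ℤ) : ℝ) * x) + cos (((a + b : ℤ) : ℝ) * x)) / 2 := fun x => by
    push_cast; rw [sub_mul, add_mul, cos_sub, cos_add]; ring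
  simp_rw [h, intervalIntegral.integral_div]
  rw [intervalIntegral.integral_add ((by fun_prop : Continuous _).intervalIntegrable _ _)
    ((by fun_prop : Continuous _).intervalIntegrable _ _), integral_cos_int_mul,
    integral_cos_int_mul]
  split_ifs <;> first | omega | ring

lemma integral_sin_mul_sin (a b : ℕ) :
    ∫ x in (0 : ℝ)..π, sin (a * x) * sin (b * x) =
      if a = b then (if a = 0 then 0 else π / 2) else 0 := by
  have h : ∀ x : ℝ, sin (a * x) * sin (b * x) =
      (cos (((a - b : ℤ) : ℝ) * x) - cos (((a + b : ℤ) : ℝ) * x)) / 2 := fun x => by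
    push_cast; rw [sub_mul, add_mul, cos_sub, cos_add]; ring
  simp_rw [h, intervalIntegral.integral_div]
  rw [intervalIntegral.integral_sub ((by fun_prop : Continuous _).intervalIntegrable _ _)
    ((by fun_prop : Continuous _).intervalIntegrable _ _), integral_cos_int_mul,
    integral_cos_int_mul]
  split_ifs <;> first | omega | ring

lemma integral_comp_pi_div_mul {ℓ : ℝ} (hℓ : 0 < ℓ) (f : ℝ → ℝ) :
    ∫ x in (0 : ℝ)..ℓ, f (π / ℓ * x) = ℓ / π * ∫ y in (0 : ℝ)..π, f y := by
  rw [intervalIntegral.integral_comp_mul_left f (by positivity), smul_eq_mul, mul_zero,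
    div_mul_cancel₀ _ hℓ.ne', inv_div]

/-- The `L²`-normalized eigenfunctions of the Neumann Laplacian on `[0, ℓ]`. -/
def neumannMode (ℓ : ℝ) (k : ℕ) (x : ℝ) : ℝ :=
  √((if k = 0 then 1 else 2) / ℓ) * cos (k * (π / ℓ * x))

def neumannModeDeriv (ℓ : ℝ) (k : ℕ) (x : ℝ) : ℝ :=
  -(√((if k = 0 then 1 else 2) / ℓ) * (k * (π / ℓ)) * sin (k * (π / ℓ * x)))

lemma continuous_neumannMode (ℓ : ℝ) (k : ℕ) : Continuous (neumannMode ℓ k) := by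
  unfold neumannMode; fun_prop

lemma continuous_neumannModeDeriv (ℓ : ℝ) (k : ℕ) : Continuous (neumannModeDeriv ℓ k) := by
  unfold neumannModeDeriv; fun_prop

lemma contDiff_neumannMode (ℓ : ℝ) (k : ℕ) : ContDiff ℝ 1 (neumannMode ℓ k) := by
  unfold neumannMode; fun_prop

lemma hasDerivAt_neumannMode (ℓ : ℝ) (k : ℕ) (x : ℝ) :
    HasDerivAt (neumannMode ℓ k) (neumannModeDeriv ℓ k x) x := by
  refine ((((hasDerivAt_id x).const_mul (π / ℓ)).const_mul (k : ℝ)).cos.const_mul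
    √((if k = 0 then 1 else 2) / ℓ)).congr_deriv ?_
  simp only [neumannModeDeriv, id, mul_one]
  ring

lemma integral_neumannMode_mul {ℓ : ℝ} (hℓ : 0 < ℓ) (a b : ℕ) :
    ∫ x in (0 : ℝ)..ℓ, neumannMode ℓ a x * neumannMode ℓ b x = if a = b then 1 else 0 := by
  have h : ∀ x, neumannMode ℓ a x * neumannMode ℓ b x = √((if a = 0 then 1 else 2) / ℓ) *
      √((if b = 0 then 1 else 2) / ℓ) * (cos (a * (π / ℓ * x)) * cos (b * (π / ℓ * x))) :=
    fun x => by unfold neumannMode; ring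
  simp_rw [h, intervalIntegral.integral_const_mul]
  rw [integral_comp_pi_div_mul hℓ (fun y => cos (a * y) * cos (b * y)), integral_cos_mul_cos]
  rcases eq_or_ne a b with rfl | hab
  · rw [if_pos rfl, if_pos rfl, mul_self_sqrt (by positivity)]
    split_ifs <;> field_simp
  · simp [hab]

lemma integral_neumannModeDeriv_mul {ℓ : ℝ} (hℓ : 0 < ℓ) (a b : ℕ) :
    ∫ x in (0 : ℝ)..ℓ, neumannModeDeriv ℓ a x * neumannModeDeriv ℓ b x =
      if a = b then (a * (π / ℓ)) ^ 2 else 0 := by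
  have h : ∀ x, neumannModeDeriv ℓ a x * neumannModeDeriv ℓ b x =
      √((if a = 0 then 1 else 2) / ℓ) * √((if b = 0 then 1 else 2) / ℓ) *
        (a * (π / ℓ)) * (b * (π / ℓ)) * (sin (a * (π / ℓ * x)) * sin (b * (π / ℓ * x))) :=
    fun x => by unfold neumannModeDeriv; ring
  simp_rw [h, intervalIntegral.integral_const_mul]
  rw [integral_comp_pi_div_mul hℓ (fun y => sin (a * y) * sin (b * y)), integral_sin_mul_sin]
  rcases eq_or_ne a b with rfl | hab
  · rw [if_pos rfl, if_pos rfl, mul_self_sqrt (by positivity)]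
    split_ifs with ha
    · simp [ha]
    · field_simp
  · simp [hab]

lemma hasDerivAt_prod_update {ι : Type*} [Fintype ι] [DecidableEq ι] {f : ι → ℝ → ℝ}
    {z : ι → ℝ} {j : ι} {d : ℝ} (hf : HasDerivAt (f j) d (z j)) :
    HasDerivAt (fun t => ∏ i, f i (Function.update z j t i))
      (d * ∏ i ∈ Finset.univ.erase j, f i (z i)) (z j) := by
  have hsplit : ∀ t, ∏ i, f i (Function.update z j t i) =
      f j t * ∏ i ∈ Finset.univ.erase j, f i (z i) := fun t => by
    rw [← Finset.mul_prod_erase _ _ (Finset.mem_univ j), Function.update_self]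
    congr 1
    exact Finset.prod_congr rfl fun i hi => by
      rw [Function.update_of_ne (Finset.ne_of_mem_erase hi)]
  simp_rw [hsplit]
  exact hf.mul_const _

section

variable {n : ℕ} {ℓ : ℝ}

lemma volumeReal_box (hℓ : 0 ≤ ℓ) : volume.real (box n ℓ) = ℓ ^ n := by
  simp [box, measureReal_def, Real.volume_Icc_pi, hℓ]

lemma integral_box_prod (hℓ : 0 ≤ ℓ) (f : Fin n → ℝ → ℝ) :
    ∫ z in box n ℓ, ∏ i, f i (z i) = ∏ i, ∫ x in (0 : ℝ)..ℓ, f i x := by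
  rw [box, volume_pi, Measure.restrict_pi_pi, integral_fintype_prod_eq_prod]
  simp_rw [intervalIntegral.integral_of_le hℓ, integral_Icc_eq_integral_Ioc]

/-- The Leibniz expansion of `det (v i k (z i))_{k,i}`. Letting the one-particle functions depend
on the particle `i` makes the `z j`-derivative of a Slater determinant again a `slaterSum`. -/
def slaterSum (v : Fin n → ℕ → ℝ → ℝ) (z : Fin n → ℝ) : ℝ :=
  ∑ σ : Perm (Fin n), ((Perm.sign σ : ℤ) : ℝ) * ∏ i, v i (σ i) (z i)

lemma slaterSum_eq_det (φ : ℕ → ℝ → ℝ) (z : Fin n → ℝ) :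
    slaterSum (fun _ => φ) z = (Matrix.of fun k i : Fin n => φ k (z i)).det := by
  rw [Matrix.det_apply']
  rfl

lemma slaterSum_eq_zero {φ : ℕ → ℝ → ℝ} {z : Fin n → ℝ} {i j : Fin n} (hij : i ≠ j)
    (hz : z i = z j) : slaterSum (fun _ => φ) z = 0 := by
  rw [slaterSum_eq_det]
  exact Matrix.det_zero_of_column_eq hij fun k => by simp [hz]

lemma contDiff_slaterSum {v : Fin n → ℕ → ℝ → ℝ} (hv : ∀ i k, ContDiff ℝ 1 (v i k)) :
    ContDiff ℝ 1 (slaterSum v) := by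
  unfold slaterSum
  refine ContDiff.sum fun σ _ => contDiff_const.mul (contDiff_prod fun i _ => ?_)
  exact (hv i (σ i)).comp (contDiff_apply ℝ ℝ i)

lemma hasDerivAt_slaterSum_update {φ φ' : ℕ → ℝ → ℝ} (hφ : ∀ k x, HasDerivAt (φ k) (φ' k x) x)
    (z : Fin n → ℝ) (j : Fin n) :
    HasDerivAt (fun t => slaterSum (fun _ => φ) (Function.update z j t))
      (slaterSum (Function.update (fun _ => φ) j φ') z) (z j) := by
  unfold slaterSum
  refine HasDerivAt.fun_sum fun σ _ => ?_
  have hprod : ∏ i, Function.update (fun _ => φ) j φ' i (σ i) (z i) =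
      φ' (σ j) (z j) * ∏ i ∈ Finset.univ.erase j, φ (σ i) (z i) := by
    rw [← Finset.mul_prod_erase _ _ (Finset.mem_univ j), Function.update_self]
    congr 1
    exact Finset.prod_congr rfl fun i hi => by
      rw [Function.update_of_ne (Finset.ne_of_mem_erase hi)]
  rw [hprod]
  exact (hasDerivAt_prod_update (f := fun i => φ (σ i)) (hφ _ _)).const_mul _

lemma integral_sq_slaterSum (hℓ : 0 ≤ ℓ) {v : Fin n → ℕ → ℝ → ℝ}
    (hv : ∀ i k, Continuous (v i k)) {r : Fin n → ℕ → ℝ}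
    (horth : ∀ i a b, ∫ x in (0 : ℝ)..ℓ, v i a x * v i b x = if a = b then r i a else 0) :
    ∫ z in box n ℓ, slaterSum v z ^ 2 = ∑ σ : Perm (Fin n), ∏ i, r i (σ i) := by
  set term : Perm (Fin n) → Perm (Fin n) → (Fin n → ℝ) → ℝ := fun σ τ z =>
    ((Perm.sign σ : ℤ) : ℝ) * ((Perm.sign τ : ℤ) : ℝ) * ∏ i, (v i (σ i) (z i) * v i (τ i) (z i))
  have hexpand : ∀ z, slaterSum v z ^ 2 = ∑ σ, ∑ τ, term σ τ z := fun z => by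
    simp only [term, slaterSum, sq, Finset.sum_mul_sum, Finset.prod_mul_distrib]
    exact Finset.sum_congr rfl fun σ _ => Finset.sum_congr rfl fun τ _ => by ring
  have hint : ∀ σ τ, IntegrableOn (term σ τ) (box n ℓ) := fun σ τ =>
    (Continuous.continuousOn (by fun_prop)).integrableOn_compact
      (isCompact_univ_pi fun _ => isCompact_Icc)
  have hterm : ∀ σ τ, ∫ z in box n ℓ, term σ τ z =
      if σ = τ then ∏ i, r i (σ i) else 0 := fun σ τ => by
    simp only [term]
    rw [integral_const_mul, integral_box_prod hℓ fun i x => v i (σ i) x * v i (τ i) x]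
    simp_rw [horth, Fin.val_inj, Finset.prod_ite_zero, Finset.mem_univ, true_implies,
      ← Perm.ext_iff]
    split_ifs with h
    · subst h
      rw [← Int.cast_mul, ← Units.val_mul, Int.units_mul_self, Units.val_one, Int.cast_one,
        one_mul]
    · rw [mul_zero]
  simp_rw [hexpand]
  rw [integral_finsetSum _ fun σ _ => integrable_finsetSum _ fun τ _ => hint σ τ]
  simp_rw [integral_finsetSum _ fun τ _ => hint _ τ, hterm, Finset.sum_ite_eq, Finset.mem_univ,
    if_true]

end

lemma sum_card_Ioi (n : ℕ) : ∑ i : Fin n, ((Finset.Ioi i).card : ℝ) = n * (n - 1) / 2 := by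
  induction n with
  | zero => simp
  | succ n ih =>
    have hshift : ∀ i : Fin n, (Finset.Ioi i.succ).card = (Finset.Ioi i).card := fun i => by
      simp only [Fin.card_Ioi, Fin.val_succ]
      omega
    rw [Fin.sum_univ_succ, Fin.card_Ioi]
    simp only [hshift, ih, Fin.val_zero, Nat.add_sub_cancel, Nat.sub_zero]
    push_cast
    ring

lemma sum_range_sq_le (n : ℕ) : ∑ k ∈ Finset.range n, (k : ℝ) ^ 2 ≤ n ^ 3 / 3 := by
  induction n with
  | zero => simp
  | succ n ih =>
    rw [Finset.sum_range_succ]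
    push_cast
    nlinarith [(n.cast_nonneg : (0 : ℝ) ≤ n)]

variable {n : ℕ} {ℓ g : ℝ}

lemma Q1D_nonneg (hℓ : 0 ≤ ℓ) (hg : 0 ≤ g) (ψ : (Fin n → ℝ) → ℝ) : 0 ≤ Q1D n ℓ g ψ := by
  unfold Q1D
  positivity

lemma E1DN_le_Q1D (hℓ : 0 ≤ ℓ) (hg : 0 ≤ g) {ψ : (Fin n → ℝ) → ℝ} (hψ : adm1D n ℓ ψ) :
    E1DN n ℓ g ≤ Q1D n ℓ g ψ :=
  csInf_le ⟨0, by rintro _ ⟨ψ, -, rfl⟩; exact Q1D_nonneg hℓ hg ψ⟩ ⟨ψ, hψ, rfl⟩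

def constState (n : ℕ) (ℓ : ℝ) (_ : Fin n → ℝ) : ℝ := (√(ℓ ^ n))⁻¹

lemma integral_constState_sq (hℓ : 0 < ℓ) : ∫ z in box n ℓ, constState n ℓ z ^ 2 = 1 := by
  simp only [constState]
  rw [setIntegral_const, volumeReal_box hℓ.le, inv_pow, sq_sqrt (by positivity), smul_eq_mul,
    mul_inv_cancel₀ (by positivity)]

lemma adm1D_constState (hℓ : 0 < ℓ) : adm1D n ℓ (constState n ℓ) :=
  ⟨contDiff_const, integral_constState_sq hℓ⟩

lemma Q1D_constState (hℓ : 0 < ℓ) :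
    Q1D n ℓ g (constState n ℓ) = g * (n * (n - 1) / 2) / ℓ := by
  have hderiv : ∀ (j : Fin n) (z : Fin n → ℝ),
      deriv (fun t => constState n ℓ (Function.update z j t)) (z j) = 0 :=
    fun _ _ => deriv_const _ _
  have hnorm : ∀ i j : Fin n,
      ∫ z in box n ℓ, constState n ℓ (Function.update z j (z i)) ^ 2 = 1 :=
    fun _ _ => integral_constState_sq hℓ
  simp only [Q1D, hderiv, hnorm, mul_one, ne_eq, OfNat.ofNat_ne_zero, not_false_eq_true,
    zero_pow, integral_zero, Finset.sum_const_zero, zero_add, Finset.sum_const, nsmul_eq_mul]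
  rw [← Finset.sum_mul, sum_card_Ioi]
  ring

def fermiState (n : ℕ) (ℓ : ℝ) (z : Fin n → ℝ) : ℝ :=
  (√(n.factorial : ℝ))⁻¹ * slaterSum (fun _ => neumannMode ℓ) z

lemma inv_sqrt_factorial_sq : (√(n.factorial : ℝ))⁻¹ ^ 2 = (n.factorial : ℝ)⁻¹ := by
  rw [inv_pow, sq_sqrt (by positivity)]

lemma integral_fermiState_sq (hℓ : 0 < ℓ) : ∫ z in box n ℓ, fermiState n ℓ z ^ 2 = 1 := by
  simp_rw [fermiState, mul_pow, inv_sqrt_factorial_sq]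
  rw [integral_const_mul, integral_sq_slaterSum hℓ.le (fun _ => continuous_neumannMode ℓ)
    (r := fun _ _ => 1) fun _ => integral_neumannMode_mul hℓ]
  simp only [Finset.prod_const_one, Finset.sum_const, Finset.card_univ, Fintype.card_perm,
    Fintype.card_fin, nsmul_eq_mul, mul_one]
  exact inv_mul_cancel₀ (by positivity)

lemma adm1D_fermiState (hℓ : 0 < ℓ) : adm1D n ℓ (fermiState n ℓ) :=
  ⟨contDiff_const.mul (contDiff_slaterSum fun _ => contDiff_neumannMode ℓ),
    integral_fermiState_sq hℓ⟩

lemma integral_deriv_fermiState_sq (hℓ : 0 < ℓ) (j : Fin n) :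
    ∫ z in box n ℓ, deriv (fun t => fermiState n ℓ (Function.update z j t)) (z j) ^ 2 =
      (n.factorial : ℝ)⁻¹ * ∑ σ : Perm (Fin n), ((σ j : ℕ) * (π / ℓ)) ^ 2 := by
  set v := Function.update (fun _ => neumannMode ℓ) j (neumannModeDeriv ℓ)
  have hderiv : ∀ z, deriv (fun t => fermiState n ℓ (Function.update z j t)) (z j) =
      (√(n.factorial : ℝ))⁻¹ * slaterSum v z := fun z =>
    ((hasDerivAt_slaterSum_update (hasDerivAt_neumannMode ℓ) z j).const_mul _).deriv
  have hcont : ∀ i k, Continuous (v i k) := fun i k => by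
    rcases eq_or_ne i j with rfl | hij
    · simpa [v] using continuous_neumannModeDeriv ℓ k
    · simpa [v, hij] using continuous_neumannMode ℓ k
  have horth : ∀ i a b, ∫ x in (0 : ℝ)..ℓ, v i a x * v i b x =
      if a = b then (if i = j then (a * (π / ℓ)) ^ 2 else 1) else 0 := fun i a b => by
    rcases eq_or_ne i j with rfl | hij
    · simp [v, integral_neumannModeDeriv_mul hℓ]
    · simp [v, hij, integral_neumannMode_mul hℓ]
  simp_rw [hderiv, mul_pow, inv_sqrt_factorial_sq]
  rw [integral_const_mul, integral_sq_slaterSum hℓ.le hcont horth]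
  simp only [Finset.prod_ite_eq', Finset.mem_univ, if_true, mul_pow]

lemma fermiState_update_eq_zero {i j : Fin n} (hij : i ≠ j) (z : Fin n → ℝ) :
    fermiState n ℓ (Function.update z j (z i)) = 0 := by
  rw [fermiState, slaterSum_eq_zero hij (by simp [hij]), mul_zero]

lemma Q1D_fermiState (hℓ : 0 < ℓ) :
    Q1D n ℓ g (fermiState n ℓ) = (π / ℓ) ^ 2 * ∑ k ∈ Finset.range n, (k : ℝ) ^ 2 := by
  have hinteraction : ∀ i, ∑ j ∈ Finset.Ioi i,
      ℓ⁻¹ * ∫ z in box n ℓ, fermiState n ℓ (Function.update z j (z i)) ^ 2 = 0 := fun i =>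
    Finset.sum_eq_zero fun j hj => by
      simp [fermiState_update_eq_zero (Finset.mem_Ioi.mp hj).ne]
  have hperm : ∀ σ : Perm (Fin n), ∑ j, ((σ j : ℕ) * (π / ℓ)) ^ 2 =
      (π / ℓ) ^ 2 * ∑ k ∈ Finset.range n, (k : ℝ) ^ 2 := fun σ => by
    rw [Equiv.sum_comp σ fun k : Fin n => ((k : ℕ) * (π / ℓ)) ^ 2,
      Fin.sum_univ_eq_sum_range (fun k => ((k : ℝ) * (π / ℓ)) ^ 2), Finset.mul_sum]
    exact Finset.sum_congr rfl fun k _ => by ring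
  simp_rw [Q1D, hinteraction, Finset.sum_const_zero, mul_zero, add_zero,
    integral_deriv_fermiState_sq hℓ, ← Finset.mul_sum]
  rw [Finset.sum_comm]
  simp_rw [hperm]
  rw [Finset.sum_const, Finset.card_univ, Fintype.card_perm, Fintype.card_fin, nsmul_eq_mul,
    inv_mul_cancel_left₀ (by positivity)]

end LiebLiniger

theorem stmt18_general (n : ℕ) (ℓ g : ℝ) (hℓ : 0 < ℓ) (hg : 0 ≤ g) :
    E1DN n ℓ g ≤ g * (n : ℝ) * ((n : ℝ) - 1) / (2 * ℓ) ∧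
    E1DN n ℓ g ≤ (Real.pi ^ 2 / 3) * (n : ℝ) ^ 3 / ℓ ^ 2 := by
  open LiebLiniger in
  exact ⟨calc
      E1DN n ℓ g ≤ Q1D n ℓ g (constState n ℓ) := E1DN_le_Q1D hℓ.le hg (adm1D_constState hℓ)
      _ = g * n * (n - 1) / (2 * ℓ) := by rw [Q1D_constState hℓ]; ring,
    calc
      E1DN n ℓ g ≤ Q1D n ℓ g (fermiState n ℓ) := E1DN_le_Q1D hℓ.le hg (adm1D_fermiState hℓ)
      _ = (π / ℓ) ^ 2 * ∑ k ∈ Finset.range n, (k : ℝ) ^ 2 := Q1D_fermiState hℓ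
      _ ≤ (π / ℓ) ^ 2 * (n ^ 3 / 3) := by gcongr; exact sum_range_sq_le n
      _ = π ^ 2 / 3 * n ^ 3 / ℓ ^ 2 := by ring⟩

/-- Upper bounds for the Neumann Lieb-Liniger energy:
`E_N^{1D}(n,ℓ,g) ≤ g n(n−1)/(2ℓ)` and `E_N^{1D}(n,ℓ,g) ≤ (π²/3) n³/ℓ²`. -/
theorem stmt18 (n : ℕ) (hn : 1 ≤ n) (ℓ g : ℝ) (hℓ : 0 < ℓ) (hg : 0 ≤ g) :
    E1DN n ℓ g ≤ g * (n : ℝ) * ((n : ℝ) - 1) / (2 * ℓ) ∧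
    E1DN n ℓ g ≤ (Real.pi ^ 2 / 3) * (n : ℝ) ^ 3 / ℓ ^ 2 :=
  stmt18_general n ℓ g hℓ hg
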